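/- Let n be a positive integer and G = S_n ≀ S_2. The subgroup G′ of G generated by the involutive swaps is exactly the set of elements (σ, τ, b) ∈ G such that σ and τ have the same sign, i.e., σ and τ are both even permutations or both odd permutations. -/

import Mathlib

open scoped Classical

@[ext] structure Wr (n : ℕ) where
  fst : Equiv.Perm (Fin n)
  snd : Equiv.Perm (Fin n)
  bit : ZMod 2
  deriving DecidableEq, Fintype

namespace Wr

variable {n : ℕ}

protected def mul (x y : Wr n) : Wr n :=
  ⟨if x.bit = 0 then x.fst * y.fst else x.fst * y.snd,
   if x.bit = 0 then x.snd * y.snd else x.snd * y.fst,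
   x.bit + y.bit⟩

protected def inv (x : Wr n) : Wr n :=
  ⟨if x.bit = 0 then x.fst⁻¹ else x.snd⁻¹,
   if x.bit = 0 then x.snd⁻¹ else x.fst⁻¹,
   x.bit⟩

instance : Group (Wr n) where
  mul := Wr.mul
  one := ⟨1, 1, 0⟩
  inv := Wr.inv
  mul_assoc x y z := by
    show Wr.mul (Wr.mul x y) z = Wr.mul x (Wr.mul y z)
    obtain ⟨a, b, c⟩ := x; obtain ⟨d, e, f⟩ := y; obtain ⟨g, h, i⟩ := z
    obtain rfl | rfl := (by decide : ∀ j : ZMod 2, j = 0 ∨ j = 1) c <;> obtain rfl | rfl := (by decide : ∀ j : ZMod 2, j = 0 ∨ j = 1) f <;>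
      simp [Wr.mul, mul_assoc, show (1 : ZMod 2) ≠ 0 by decide,
        show (1 + 1 : ZMod 2) = 0 by decide, show ∀ j : ZMod 2, 1 + (1 + j) = j by decide]
  one_mul x := by
    show Wr.mul ⟨1, 1, 0⟩ x = x
    simp [Wr.mul]
  mul_one x := by
    show Wr.mul x ⟨1, 1, 0⟩ = x
    obtain ⟨a, b, c⟩ := x
    obtain rfl | rfl := (by decide : ∀ j : ZMod 2, j = 0 ∨ j = 1) c <;> simp [Wr.mul]
  inv_mul_cancel x := by
    show Wr.mul (Wr.inv x) x = ⟨1, 1, 0⟩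
    obtain ⟨a, b, c⟩ := x
    obtain rfl | rfl := (by decide : ∀ j : ZMod 2, j = 0 ∨ j = 1) c <;> simp [Wr.mul, Wr.inv, show (1 : ZMod 2) ≠ 0 by decide,
      show (1 + 1 : ZMod 2) = 0 by decide]

/-- An involutive swap: an element of the form `(g, g⁻¹, 1)`. -/
def IsSwap (k : Wr n) : Prop := ∃ g : Equiv.Perm (Fin n), k = ⟨g, g⁻¹, 1⟩

/-- The faithful action of `S_n ≀ S_2` on `Fin n ⊕ Fin n`:
`ι(σ,τ,0)` maps `inl i ↦ inl (σ i)`, `inr i ↦ inr (τ i)`, while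
`ι(σ,τ,1)` maps `inl i ↦ inr (τ i)`, `inr i ↦ inl (σ i)`. -/
def iota : Wr n →* Equiv.Perm (Fin n ⊕ Fin n) where
  toFun x := Equiv.sumCongr x.fst x.snd *
    (if x.bit = 0 then 1 else Equiv.sumComm (Fin n) (Fin n))
  map_one' := by
    simp [show ((1 : Wr n)).bit = 0 from rfl, show ((1 : Wr n)).fst = 1 from rfl,
      show ((1 : Wr n)).snd = 1 from rfl]
  map_mul' x y := by
    have hxy : x * y = Wr.mul x y := rfl
    obtain ⟨a, b, c⟩ := x; obtain ⟨d, e, f⟩ := y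
    rw [hxy]
    obtain rfl | rfl := (by decide : ∀ j : ZMod 2, j = 0 ∨ j = 1) c <;> obtain rfl | rfl := (by decide : ∀ j : ZMod 2, j = 0 ∨ j = 1) f <;>
      · ext u
        rcases u with u | u <;>
          simp [Wr.mul, show (1 : ZMod 2) ≠ 0 by decide,
            show (1 + 1 : ZMod 2) = 0 by decide, Equiv.Perm.mul_apply]

end Wr

/-- The Hilbert space `ℂ[G^m]`. -/
abbrev GIHilb (n m : ℕ) : Type := EuclideanSpace ℂ (Fin m → Wr n)

noncomputable section

namespace Wr

/-- The `k`-vector associated to `c ∈ G^m`: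
`x ↦ 2^{-m/2} ∏_i [x i ∈ {c i, c i * k}]`. -/
def kvec (n m : ℕ) (k : Wr n) (c : Fin m → Wr n) : GIHilb n m :=
  (WithLp.equiv 2 _).symm fun x =>
    ((Real.sqrt (2 ^ m) : ℝ)⁻¹ : ℂ) *
      ∏ i, (if x i = c i ∨ x i = c i * k then (1 : ℂ) else 0)

/-- `ℋ(k)`: the span of all `k`-vectors. -/
def kSpace (n m : ℕ) (k : Wr n) : Submodule ℂ (GIHilb n m) :=
  Submodule.span ℂ (Set.range (kvec n m k))

/-- `ℋ₁ = ∑_k ℋ(k)`, the sum over all involutive swaps `k`. -/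
def H1 (n m : ℕ) : Submodule ℂ (GIHilb n m) :=
  ⨆ k ∈ {k : Wr n | IsSwap k}, kSpace n m k

/-- The tensor product of coset states of the subgroup `H` with coset representatives `c`:
`x ↦ |H|^{-m/2} ∏_i [x i ∈ c i H]`. -/
def cosetState {n : ℕ} (H : Subgroup (Wr n)) (m : ℕ) (c : Fin m → Wr n) : GIHilb n m :=
  (WithLp.equiv 2 _).symm fun x =>
    ((Real.sqrt ((Nat.card H : ℝ) ^ m))⁻¹ : ℂ) *
      ∏ i, (if (c i)⁻¹ * x i ∈ H then (1 : ℂ) else 0)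

end Wr

/-- The subgroup of `S_n ≀ S_2` of elements acting (via `ι`) as automorphisms of the graph `Γ`. -/
def autSubgroup {n : ℕ} (Γ : SimpleGraph (Fin n ⊕ Fin n)) : Subgroup (Wr n) where
  carrier := {h | ∀ u v, Γ.Adj (Wr.iota h u) (Wr.iota h v) ↔ Γ.Adj u v}
  one_mem' := by intro u v; simp
  mul_mem' := by
    intro a b ha hb u v
    rw [map_mul, Equiv.Perm.mul_apply, Equiv.Perm.mul_apply, ha, hb]
  inv_mem' := by
    intro a ha u v
    have := ha ((Wr.iota a)⁻¹ u) ((Wr.iota a)⁻¹ v)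
    simpa [map_inv] using this.symm

end

/-! Swaps lie in the kernel of `(σ, τ, b) ↦ sign σ * sign τ`, which is exactly the set of
elements with `sign σ = sign τ`. Conversely, the product of the swaps `(g, g⁻¹, 1)` and
`(1, 1, 1)` is `(g, g⁻¹, 0)`, and three such elements multiply to `(⁅g, h⁆, 1, 0)`. The
commutator subgroup of `S_n` contains every three-cycle (it is conjugate to its square), hence
all of `A_n`; this yields every `(σ, 1, 0)` with `σ` even, and
`(σ, τ, b) = (στ, 1, 0) (τ⁻¹, τ, 0) (1, 1, b)`. -/

open Equiv Equiv.Perm Subgroup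
open scoped commutatorElement

theorem Equiv.Perm.alternatingGroup_le_commutator (α : Type*) [Fintype α] [DecidableEq α] :
    alternatingGroup α ≤ commutator (Perm α) := by
  rw [← closure_three_cycles_eq_alternating, commutator_eq_closure]
  refine Subgroup.closure_mono fun c hc => mem_commutatorSet_of_isConj_sq _ ?_
  rw [isConj_iff_cycleType_eq, hc.cycleType, sq, hc.isThreeCycle_sq.cycleType]

namespace Wr

variable {n : ℕ}

theorem mul_def (x y : Wr n) : x * y = Wr.mul x y := rfl

abbrev swapSubgroup (n : ℕ) : Subgroup (Wr n) :=
  closure {k : Wr n | IsSwap k}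

def signProd : Wr n →* ℤˣ where
  toFun x := sign x.fst * sign x.snd
  map_one' := by simp [show (1 : Wr n) = ⟨1, 1, 0⟩ from rfl]
  map_mul' x y := by
    obtain ⟨a, b, c⟩ := x
    obtain ⟨d, e, f⟩ := y
    by_cases hc : c = 0 <;> simp [mul_def, Wr.mul, hc, mul_comm, mul_left_comm]

theorem mem_ker_signProd_iff (x : Wr n) : x ∈ signProd.ker ↔ sign x.fst = sign x.snd := by
  rw [MonoidHom.mem_ker, show signProd x = sign x.fst * sign x.snd from rfl,
    mul_eq_one_iff_eq_inv, Int.units_inv_eq_self]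

theorem swapSubgroup_le_ker_signProd : swapSubgroup n ≤ signProd.ker :=
  closure_le _ |>.mpr <| by
    rintro _ ⟨g, rfl⟩
    exact (mem_ker_signProd_iff _).mpr (by simp)

def inlHom : Perm (Fin n) →* Wr n where
  toFun σ := ⟨σ, 1, 0⟩
  map_one' := rfl
  map_mul' σ τ := by simp [mul_def, Wr.mul]

theorem mk_inv_zero_mem_swapSubgroup (g : Perm (Fin n)) :
    (⟨g, g⁻¹, 0⟩ : Wr n) ∈ swapSubgroup n := by
  have h : (⟨g, g⁻¹, 0⟩ : Wr n) = ⟨g, g⁻¹, 1⟩ * ⟨1, 1⁻¹, 1⟩ := by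
    simp [mul_def, Wr.mul, show (1 + 1 : ZMod 2) = 0 from rfl]
  rw [h]
  exact mul_mem (subset_closure ⟨g, rfl⟩) (subset_closure ⟨1, rfl⟩)

theorem mk_one_one_mem_swapSubgroup (b : ZMod 2) : (⟨1, 1, b⟩ : Wr n) ∈ swapSubgroup n := by
  fin_cases b
  · exact one_mem _
  · exact subset_closure ⟨1, rfl⟩

theorem inlHom_commutatorElement (g h : Perm (Fin n)) :
    inlHom ⁅g, h⁆ =
      (⟨g, g⁻¹, 0⟩ : Wr n) * ⟨h, h⁻¹, 0⟩ * ⟨(h * g)⁻¹, (h * g)⁻¹⁻¹, 0⟩ := by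
  simp [inlHom, commutatorElement_def, mul_def, Wr.mul, mul_assoc]

theorem inlHom_mem_swapSubgroup {σ : Perm (Fin n)} (hσ : sign σ = 1) :
    inlHom σ ∈ swapSubgroup n := by
  have hcomm : commutator (Perm (Fin n)) ≤ (swapSubgroup n).comap inlHom := by
    rw [commutator_eq_closure, closure_le]
    rintro _ ⟨g, h, rfl⟩
    rw [SetLike.mem_coe, mem_comap, inlHom_commutatorElement]
    exact mul_mem (mul_mem (mk_inv_zero_mem_swapSubgroup g) (mk_inv_zero_mem_swapSubgroup h))
      (mk_inv_zero_mem_swapSubgroup _)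
  exact hcomm (alternatingGroup_le_commutator _ (mem_alternatingGroup.mpr hσ))

theorem mk_eq_inlHom_mul (σ τ : Perm (Fin n)) (b : ZMod 2) :
    (⟨σ, τ, b⟩ : Wr n) = inlHom (σ * τ) * ⟨τ⁻¹, τ⁻¹⁻¹, 0⟩ * ⟨1, 1, b⟩ := by
  simp [inlHom, mul_def, Wr.mul]

end Wr

theorem mem_closure_swaps_iff_sign_eq_general
    (n : ℕ) (x : Wr n) :
    x ∈ Subgroup.closure {k : Wr n | Wr.IsSwap k} ↔
      Equiv.Perm.sign x.fst = Equiv.Perm.sign x.snd := by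
  refine ⟨fun hx => (Wr.mem_ker_signProd_iff x).mp (Wr.swapSubgroup_le_ker_signProd hx),
    fun hsign => ?_⟩
  obtain ⟨σ, τ, b⟩ := x
  have heven : sign (σ * τ) = 1 := by rw [map_mul, hsign, Int.units_mul_self]
  rw [Wr.mk_eq_inlHom_mul]
  exact mul_mem (mul_mem (Wr.inlHom_mem_swapSubgroup heven) (Wr.mk_inv_zero_mem_swapSubgroup _))
    (Wr.mk_one_one_mem_swapSubgroup b)

/-- The subgroup of `G = S_n ≀ S_2` generated by the involutive swaps consists exactly of the
elements `(σ, τ, b)` with `sign σ = sign τ`. -/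
theorem mem_closure_swaps_iff_sign_eq
    (n : ℕ) (hn : 0 < n) (x : Wr n) :
    x ∈ Subgroup.closure {k : Wr n | Wr.IsSwap k} ↔
      Equiv.Perm.sign x.fst = Equiv.Perm.sign x.snd :=
  mem_closure_swaps_iff_sign_eq_general n x
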